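/- The Laplacian matrix L has index 1, rank L = n − d, the null space of L equals the range of J̃, the range of L equals the null space of J̃, and J̃ is the eigenprojection of L at 0 (the projection onto N(L) along R(L)). -/

import Mathlib

/-!
The heart is the Chebotarev–Shamis recursion `Q_k L = σ_{k+1} I - Q_{k+1}` for the matrices `Q_k`
of in-forests with `k` arcs. Entrywise it is a weighted count: adding an arc `j → l` to a forest in
which `i` lies in the tree rooted at `j`, or an arc `s → j` from the root `s` of the tree of `i`,
gives a forest with `k + 1` arcs; the additions that close a cycle through `j` match each other by
re-rooting the tree at `j`.

If `m` is the size of a maximum in-forest, then `Q_{m+1} = 0` and `σ_{m+1} = 0`, so `J̃ L = 0` and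
`(σ_m⁻¹ Q_{m-1}) L = I - J̃`. These two identities alone force `N(L) = R(J̃)` and `R(L) = N(J̃)`
(a vector killed by `L` is fixed by `J̃`; the rest is a dimension count), and hence `L J̃ = 0`,
`J̃² = J̃` and `N(L²) = N(L)`. Finally `rank J̃ = tr J̃ = n - m`, because a forest with `m` arcs
has `n - m` roots.
-/

open Matrix Finset Polynomial

/-- `A` is (the arc set of) an in-forest of the weighted digraph with arc-weight
matrix `W`: all arcs are loopless arcs of positive weight, every vertex has
outdegree at most one, and there are no directed cycles. -/
def IsInForest {n : ℕ} (W : Matrix (Fin n) (Fin n) ℝ)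
    (A : Finset (Fin n × Fin n)) : Prop :=
  (∀ e ∈ A, e.1 ≠ e.2 ∧ 0 < W e.1 e.2) ∧
  (∀ i : Fin n, (A.filter (fun e => e.1 = i)).card ≤ 1) ∧
  (∀ i : Fin n, ¬ Relation.TransGen (fun a b => (a, b) ∈ A) i i)

/-- The weight of a forest: the product of its arc weights. -/
def forestWeight {n : ℕ} (W : Matrix (Fin n) (Fin n) ℝ)
    (A : Finset (Fin n × Fin n)) : ℝ :=
  ∏ e ∈ A, W e.1 e.2

/-- `i` belongs to the tree of the forest `A` converging to (rooted at) `j`. -/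
def InTreeRootedAt {n : ℕ} (A : Finset (Fin n × Fin n)) (i j : Fin n) : Prop :=
  Relation.ReflTransGen (fun a b => (a, b) ∈ A) i j ∧ ∀ e ∈ A, e.1 ≠ j

open scoped Classical in
/-- `σ_k`: the total weight of in-forests with `k` arcs. -/
noncomputable def sigmaW {n : ℕ} (W : Matrix (Fin n) (Fin n) ℝ) (k : ℕ) : ℝ :=
  ∑ A ∈ Finset.univ.powerset.filter
      (fun A => IsInForest W A ∧ A.card = k), forestWeight W A

open scoped Classical in
/-- `Q_k`: the matrix of in-forests with `k` arcs; its `(i,j)` entry is the total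
weight of in-forests with `k` arcs in which `i` belongs to a tree rooted at `j`. -/
noncomputable def forestMatrix {n : ℕ} (W : Matrix (Fin n) (Fin n) ℝ) (k : ℕ) :
    Matrix (Fin n) (Fin n) ℝ :=
  Matrix.of fun i j =>
    ∑ A ∈ Finset.univ.powerset.filter
        (fun A => IsInForest W A ∧ A.card = k ∧ InTreeRootedAt A i j),
      forestWeight W A

open scoped Classical in
/-- `σ`: the total weight of all in-forests. -/
noncomputable def sigmaTot {n : ℕ} (W : Matrix (Fin n) (Fin n) ℝ) : ℝ :=
  ∑ A ∈ Finset.univ.powerset.filter (fun A => IsInForest W A), forestWeight W A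

open scoped Classical in
/-- `Q`: the matrix of all in-forests. -/
noncomputable def forestMatrixTot {n : ℕ} (W : Matrix (Fin n) (Fin n) ℝ) :
    Matrix (Fin n) (Fin n) ℝ :=
  Matrix.of fun i j =>
    ∑ A ∈ Finset.univ.powerset.filter
        (fun A => IsInForest W A ∧ InTreeRootedAt A i j), forestWeight W A

open scoped Classical in
/-- The number of arcs in a maximum in-forest (equal to `n - d` where `d` is the
in-forest dimension). -/
noncomputable def maxForestCard {n : ℕ} (W : Matrix (Fin n) (Fin n) ℝ) : ℕ :=
  (Finset.univ.powerset.filter (fun A => IsInForest W A)).sup Finset.card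

/-- The in-forest dimension `d` of the digraph. -/
noncomputable def forestDim {n : ℕ} (W : Matrix (Fin n) (Fin n) ℝ) : ℕ :=
  n - maxForestCard W

/-- The (row) Laplacian matrix of the weighted digraph with arc-weight matrix `W`. -/
def lap {n : ℕ} (W : Matrix (Fin n) (Fin n) ℝ) : Matrix (Fin n) (Fin n) ℝ :=
  Matrix.diagonal (fun i => ∑ j, W i j) - W

/-- `J̃`: the normalized matrix of maximum in-forests. -/
noncomputable def Jtilde {n : ℕ} (W : Matrix (Fin n) (Fin n) ℝ) :
    Matrix (Fin n) (Fin n) ℝ :=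
  (sigmaW W (maxForestCard W))⁻¹ • forestMatrix W (maxForestCard W)


open Relation

namespace LinearMap

variable {K V : Type*} [Field K] [AddCommGroup V] [Module K V] [FiniteDimensional K V]

theorem range_eq_ker_and_ker_eq_range_of_le {f g : V →ₗ[K] V}
    (hfg : range f ≤ ker g) (hgf : ker f ≤ range g) :
    range f = ker g ∧ ker f = range g := by
  have hf := finrank_range_add_finrank_ker f
  have hg := finrank_range_add_finrank_ker g
  have h₁ := Submodule.finrank_mono hfg
  have h₂ := Submodule.finrank_mono hgf
  exact ⟨Submodule.eq_of_le_of_finrank_le hfg (by omega),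
    Submodule.eq_of_le_of_finrank_le hgf (by omega)⟩

end LinearMap

namespace Matrix

variable {K ι : Type*} [Field K] [Fintype ι]

theorem rank_add_finrank_ker (A : Matrix ι ι K) :
    A.rank + Module.finrank K (LinearMap.ker A.mulVecLin) = Fintype.card ι := by
  rw [rank, LinearMap.finrank_range_add_finrank_ker, Module.finrank_fintype_fun_eq_card]

theorem rank_lt_card_of_mulVec_eq_zero {A : Matrix ι ι K} {v : ι → K} (hv : v ≠ 0)
    (hAv : A *ᵥ v = 0) : A.rank < Fintype.card ι := by
  have hker : Module.finrank K (LinearMap.ker A.mulVecLin) ≠ 0 := fun h =>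
    hv ((LinearMap.ker_eq_bot'.mp (Submodule.finrank_eq_zero.mp h)) v hAv)
  have := rank_add_finrank_ker A
  omega

theorem rank_eq_trace_of_isIdempotentElem [DecidableEq ι] {P : Matrix ι ι K}
    (hP : IsIdempotentElem P) : (P.rank : K) = P.trace := by
  have hlin : IsIdempotentElem P.toLin' := by
    rw [IsIdempotentElem, Module.End.mul_eq_comp, ← toLin'_mul, hP.eq]
  rw [← trace_toLin'_eq, ((LinearMap.isProj_range_iff_isIdempotentElem _).mpr hlin).trace,
    toLin'_apply', rank]

variable [DecidableEq ι] {L J M : Matrix ι ι K}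

theorem mulVec_eq_self_of_mulVec_eq_zero (hML : M * L = 1 - J) {v : ι → K}
    (hv : L *ᵥ v = 0) : J *ᵥ v = v := by
  have := congrArg (· *ᵥ v) hML
  simp only [← mulVec_mulVec, hv, mulVec_zero, sub_mulVec, one_mulVec] at this
  exact (sub_eq_zero.mp this.symm).symm

theorem ker_eq_range_and_range_eq_ker_of_mul_eq_one_sub (hJL : J * L = 0)
    (hML : M * L = 1 - J) :
    LinearMap.ker L.mulVecLin = LinearMap.range J.mulVecLin ∧
      LinearMap.range L.mulVecLin = LinearMap.ker J.mulVecLin := by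
  have hrange : LinearMap.range L.mulVecLin ≤ LinearMap.ker J.mulVecLin := by
    rw [LinearMap.range_le_ker_iff, ← mulVecLin_mul, hJL, mulVecLin_zero]
  have hker : LinearMap.ker L.mulVecLin ≤ LinearMap.range J.mulVecLin :=
    fun v hv => ⟨v, mulVec_eq_self_of_mulVec_eq_zero hML hv⟩
  exact (LinearMap.range_eq_ker_and_ker_eq_range_of_le hrange hker).symm

theorem rank_add_rank_of_mul_eq_one_sub (hJL : J * L = 0) (hML : M * L = 1 - J) :
    L.rank + J.rank = Fintype.card ι := by
  have h := rank_add_finrank_ker L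
  rw [(ker_eq_range_and_range_eq_ker_of_mul_eq_one_sub hJL hML).1] at h
  exact h

theorem mul_eq_zero_of_mul_eq_one_sub (hJL : J * L = 0) (hML : M * L = 1 - J) :
    L * J = 0 := by
  refine ext_of_mulVec_single fun j => ?_
  have hmem : J *ᵥ Pi.single j 1 ∈ LinearMap.ker L.mulVecLin := by
    rw [(ker_eq_range_and_range_eq_ker_of_mul_eq_one_sub hJL hML).1]
    exact LinearMap.mem_range_self _ _
  rw [← mulVec_mulVec, zero_mulVec]
  exact hmem

theorem isIdempotentElem_of_mul_eq_one_sub (hJL : J * L = 0) (hML : M * L = 1 - J) :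
    IsIdempotentElem J := by
  have h := congrArg (· * J) hML
  simp only [Matrix.mul_assoc, mul_eq_zero_of_mul_eq_one_sub hJL hML, Matrix.mul_zero,
    Matrix.sub_mul, Matrix.one_mul] at h
  exact (sub_eq_zero.mp h.symm).symm

theorem rank_mul_self_of_mul_eq_one_sub (hJL : J * L = 0) (hML : M * L = 1 - J) :
    (L * L).rank = L.rank := by
  have hker : LinearMap.ker (L * L).mulVecLin = LinearMap.ker L.mulVecLin := by
    refine le_antisymm (fun v hv => ?_) (fun v hv => ?_)
    · have hLv : L *ᵥ (L *ᵥ v) = 0 := by simpa [mulVec_mulVec] using hv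
      change L *ᵥ v = 0
      rw [← mulVec_eq_self_of_mulVec_eq_zero hML hLv, mulVec_mulVec, hJL, zero_mulVec]
    · change (L * L) *ᵥ v = 0
      rw [← mulVec_mulVec, show L *ᵥ v = 0 from hv, mulVec_zero]
  have h₁ := rank_add_finrank_ker (L * L)
  have h₂ := rank_add_finrank_ker L
  rw [hker] at h₁
  omega

end Matrix

namespace ArcSet

variable {V : Type*}

abbrev Reaches (A : Finset (V × V)) : V → V → Prop :=
  ReflTransGen fun a b => (a, b) ∈ A

def IsSink (A : Finset (V × V)) (x : V) : Prop :=
  ∀ e ∈ A, e.1 ≠ x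

abbrev RightUnique (A : Finset (V × V)) : Prop :=
  Relator.RightUnique fun a b => (a, b) ∈ A

abbrev Acyclic (A : Finset (V × V)) : Prop :=
  ∀ x, ¬ TransGen (fun a b => (a, b) ∈ A) x x

open scoped Classical in
noncomputable def outNeighbor (A : Finset (V × V)) (x : V) : V :=
  if h : ∃ y, (x, y) ∈ A then h.choose else x

variable {A B : Finset (V × V)} {a : V × V} {x y z : V}

theorem Reaches.mono (hAB : A ⊆ B) (h : Reaches A x y) : Reaches B x y :=
  ReflTransGen.mono (fun _ _ hab => hAB hab) _ _ h

theorem IsSink.anti (hAB : A ⊆ B) (h : IsSink B x) : IsSink A x :=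
  fun e he => h e (hAB he)

theorem IsSink.eq_of_reaches (hx : IsSink A x) (h : Reaches A x y) : x = y := by
  rcases h.cases_head with rfl | ⟨c, hc, -⟩
  · rfl
  · exact absurd rfl (hx _ hc)

theorem IsSink.not_mem (hx : IsSink A x) (y : V) : (x, y) ∉ A :=
  fun h => hx _ h rfl

theorem Acyclic.not_reaches_of_mem (hA : Acyclic A) (h : (x, y) ∈ A) : ¬ Reaches A y x :=
  fun hyx => hA x (TransGen.head' h hyx)

theorem Acyclic.anti (hAB : A ⊆ B) (hB : Acyclic B) : Acyclic A :=
  fun x hx => hB x (TransGen.mono (fun _ _ hab => hAB hab) _ _ hx)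

theorem exists_mem_of_not_isSink (h : ¬ IsSink A x) : ∃ y, (x, y) ∈ A := by
  simp only [IsSink, not_forall, not_not] at h
  obtain ⟨e, he, rfl⟩ := h
  exact ⟨e.2, he⟩

theorem exists_last_of_reaches (h : Reaches A x y) (hxy : x ≠ y) :
    ∃ s, (s, y) ∈ A ∧ Reaches A x s := by
  rcases h.cases_tail with rfl | ⟨s, hxs, hsy⟩
  · exact absurd rfl hxy
  · exact ⟨s, hsy, hxs⟩

theorem outNeighbor_eq (hA : RightUnique A) (h : (x, y) ∈ A) : outNeighbor A x = y := by
  have hex : ∃ y, (x, y) ∈ A := ⟨y, h⟩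
  rw [outNeighbor, dif_pos hex]
  exact hA hex.choose_spec h

theorem eq_of_mem_of_reaches (hA : RightUnique A) (hy : IsSink A y ∨ Acyclic A)
    {s s' : V} (hs : (s, y) ∈ A) (hs' : (s', y) ∈ A) (hxs : Reaches A x s)
    (hxs' : Reaches A x s') : s = s' := by
  have key : ∀ {a b : V}, (a, y) ∈ A → (b, y) ∈ A → Reaches A a b → a = b := by
    intro a b ha hb hab
    rcases hab.cases_head with rfl | ⟨c, hc, hcb⟩
    · rfl
    · obtain rfl : c = y := hA hc ha
      rcases hy with hy | hy
      · exact absurd (hy.eq_of_reaches hcb).symm (hy _ hb)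
      · exact absurd hcb (hy.not_reaches_of_mem hb)
  rcases hxs.total_of_right_unique hA hxs' with h | h
  · exact key hs hs' h
  · exact (key hs' hs h).symm

variable [DecidableEq V]

@[simp]
theorem isSink_insert : IsSink (insert a A) x ↔ a.1 ≠ x ∧ IsSink A x := by
  simp [IsSink]

theorem isSink_erase (hA : RightUnique A) (h : (x, y) ∈ A) : IsSink (A.erase (x, y)) x := by
  rintro ⟨u, v⟩ he rfl
  rw [Finset.mem_erase] at he
  exact he.1 (by rw [hA he.2 h])

theorem IsSink.eq_of_insert_eq (hA : IsSink A x) (hB : IsSink B x)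
    (h : insert (x, y) A = insert (x, z) B) : y = z ∧ A = B := by
  have hyz : y = z := by
    rcases Finset.mem_insert.mp (h ▸ Finset.mem_insert_self (x, y) A) with h' | h'
    · exact (Prod.mk.inj h').2
    · exact absurd h' (hB.not_mem y)
  subst hyz
  refine ⟨rfl, ?_⟩
  rw [← Finset.erase_insert (hA.not_mem y), ← Finset.erase_insert (hB.not_mem y), h]

theorem reaches_erase_of_reaches_fst (h : Reaches A x a.1) : Reaches (A.erase a) x a.1 := by
  induction h using ReflTransGen.head_induction_on with
  | refl => exact ReflTransGen.refl
  | @head u c huc _ ih =>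
    by_cases hua : (u, c) = a
    · rw [← hua]
    · exact ReflTransGen.head (Finset.mem_erase.mpr ⟨hua, huc⟩) ih

theorem reaches_erase_or (h : Reaches A x y) :
    Reaches (A.erase a) x y ∨ (Reaches (A.erase a) x a.1 ∧ Reaches A a.2 y) := by
  induction h using ReflTransGen.head_induction_on with
  | refl => exact Or.inl ReflTransGen.refl
  | @head u c huc hcy ih =>
    by_cases hua : (u, c) = a
    · subst hua
      exact Or.inr ⟨ReflTransGen.refl, hcy⟩
    · have huc' : (u, c) ∈ A.erase a := Finset.mem_erase.mpr ⟨hua, huc⟩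
      exact ih.imp (ReflTransGen.head huc') (And.imp_left (ReflTransGen.head huc'))

theorem reaches_erase_of_reaches_of_mem (hRU : RightUnique A) (hA : Acyclic A)
    (hxy : (x, y) ∈ A) (hxz : Reaches A x z) (hne : x ≠ z) : Reaches (A.erase (x, y)) y z := by
  obtain ⟨c, hxc, hcz⟩ := (hxz.cases_head).resolve_left hne
  obtain rfl : c = y := hRU hxc hxy
  rcases reaches_erase_or (a := (x, c)) hcz with h | ⟨h, -⟩
  · exact h
  · exact absurd (h.mono (Finset.erase_subset _ _)) (hA.not_reaches_of_mem hxy)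

theorem not_reaches_erase_of_mem (hRU : RightUnique A) (hy : IsSink A y) (hxy : (x, y) ∈ A)
    (hzx : Reaches A z x) (hzy : z ≠ y) : ¬ Reaches (A.erase (x, y)) z y := by
  intro h
  obtain ⟨c, hcy, hzc⟩ := exists_last_of_reaches h hzy
  obtain rfl : c = x := eq_of_mem_of_reaches hRU (Or.inl hy)
    (Finset.erase_subset _ _ hcy) hxy (hzc.mono (Finset.erase_subset _ _)) hzx
  exact (Finset.mem_erase.mp hcy).1 rfl

theorem reaches_insert_or (ha : ¬ Reaches A a.2 a.1) (h : Reaches (insert a A) x y) :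
    Reaches A x y ∨ (Reaches A x a.1 ∧ Reaches A a.2 y) := by
  have hsub := Finset.erase_insert_subset a A
  rcases reaches_erase_or (a := a) h with hxy | ⟨hxa, hay⟩
  · exact Or.inl (hxy.mono hsub)
  · rcases reaches_erase_or (a := a) hay with hay | ⟨haa, -⟩
    · exact Or.inr ⟨hxa.mono hsub, hay.mono hsub⟩
    · exact absurd (haa.mono hsub) ha

theorem Acyclic.insert (hA : Acyclic A) (ha : ¬ Reaches A a.2 a.1) : Acyclic (insert a A) := by
  intro v hv
  obtain ⟨c, hvc, hcv⟩ := TransGen.head'_iff.mp hv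
  rcases Finset.mem_insert.mp hvc with rfl | hvc
  · rcases reaches_insert_or ha hcv with h | ⟨h, -⟩ <;> exact ha h
  · rcases reaches_insert_or ha hcv with h | ⟨h, h'⟩
    · exact hA v (TransGen.head' hvc h)
    · exact ha (h'.trans (ReflTransGen.head hvc h))

open scoped Classical in
theorem card_filter_isSink_add_card [Fintype V] (hA : RightUnique A) :
    (Finset.univ.filter (IsSink A)).card + A.card = Fintype.card V := by
  have hfiber : ∀ x : V, (if IsSink A x then 1 else 0) + (A.filter (·.1 = x)).card = 1 := by
    intro x
    by_cases hx : IsSink A x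
    · rw [if_pos hx, Finset.card_eq_zero.mpr (Finset.filter_eq_empty_iff.mpr fun e he => hx e he)]
    · obtain ⟨y, hy⟩ := exists_mem_of_not_isSink hx
      have hsingle : A.filter (·.1 = x) = {(x, y)} := by
        refine Finset.eq_singleton_iff_unique_mem.mpr ⟨by simp [hy], fun e he => ?_⟩
        obtain ⟨heA, rfl⟩ := Finset.mem_filter.mp he
        exact Prod.ext rfl (hA heA hy)
      rw [if_neg hx, hsingle, Finset.card_singleton]
  rw [Finset.card_filter, Finset.card_eq_sum_card_fiberwise (fun e _ => Finset.mem_univ e.1),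
    ← Finset.sum_add_distrib, Finset.sum_congr rfl fun x _ => hfiber x, Finset.sum_const,
    Finset.card_univ, smul_eq_mul, mul_one]

end ArcSet

namespace InForest

open ArcSet

open scoped Classical

variable {n : ℕ} {W : Matrix (Fin n) (Fin n) ℝ} {A B : Finset (Fin n × Fin n)} {x y : Fin n}
  {k : ℕ} {i j : Fin n}

theorem _root_.IsInForest.rightUnique (h : IsInForest W A) : RightUnique A := fun x y z hy hz =>
  congrArg Prod.snd <| Finset.card_le_one.mp (h.2.1 x) (x, y) (by simp [hy]) (x, z) (by simp [hz])

theorem _root_.IsInForest.acyclic (h : IsInForest W A) : Acyclic A := h.2.2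

theorem _root_.IsInForest.pos (h : IsInForest W A) (hxy : (x, y) ∈ A) : 0 < W x y :=
  (h.1 _ hxy).2

theorem _root_.IsInForest.anti (h : IsInForest W B) (hAB : A ⊆ B) : IsInForest W A :=
  ⟨fun e he => h.1 e (hAB he),
    fun i => (Finset.card_le_card (Finset.filter_subset_filter _ hAB)).trans (h.2.1 i),
    h.acyclic.anti hAB⟩

theorem isInForest_empty : IsInForest W (∅ : Finset (Fin n × Fin n)) :=
  ⟨by simp, by simp, fun _ h => by simpa using TransGen.head'_iff.mp h⟩

theorem _root_.IsInForest.insert (h : IsInForest W A) (hpos : 0 < W x y) (hxy : x ≠ y)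
    (hx : IsSink A x) (hyx : ¬ Reaches A y x) : IsInForest W (insert (x, y) A) := by
  refine ⟨?_, fun i => ?_, h.acyclic.insert hyx⟩
  · simpa [hxy, hpos] using h.1
  · rw [Finset.filter_insert]
    split_ifs with hi
    · subst hi
      have hempty : A.filter (fun e => e.1 = x) = ∅ :=
        Finset.filter_eq_empty_iff.mpr fun e he => hx e he
      simp [hempty]
    · exact h.2.1 i

theorem forestWeight_pos (h : IsInForest W A) : 0 < forestWeight W A :=
  Finset.prod_pos fun e he => (h.1 e he).2

theorem forestWeight_insert {a : Fin n × Fin n} (ha : a ∉ A) :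
    forestWeight W (insert a A) = W a.1 a.2 * forestWeight W A :=
  Finset.prod_insert ha

noncomputable def forestsOfCard (W : Matrix (Fin n) (Fin n) ℝ) (k : ℕ) :
    Finset (Finset (Fin n × Fin n)) :=
  Finset.univ.powerset.filter fun A => IsInForest W A ∧ A.card = k

noncomputable def rootedForests (W : Matrix (Fin n) (Fin n) ℝ) (k : ℕ) (i j : Fin n) :
    Finset (Finset (Fin n × Fin n)) :=
  Finset.univ.powerset.filter fun A => IsInForest W A ∧ A.card = k ∧ InTreeRootedAt A i j

@[simp]
theorem mem_forestsOfCard : A ∈ forestsOfCard W k ↔ IsInForest W A ∧ A.card = k := by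
  simp [forestsOfCard]

@[simp]
theorem mem_rootedForests :
    A ∈ rootedForests W k i j ↔ IsInForest W A ∧ A.card = k ∧ Reaches A i j ∧ IsSink A j := by
  simp only [rootedForests, Finset.mem_filter, Finset.mem_powerset, Finset.subset_univ, true_and]
  rfl

theorem sigmaW_eq_sum : sigmaW W k = ∑ A ∈ forestsOfCard W k, forestWeight W A := rfl

theorem forestMatrix_apply :
    forestMatrix W k i j = ∑ A ∈ rootedForests W k i j, forestWeight W A := rfl

theorem rootedForests_eq_filter :
    rootedForests W k i j = ((forestsOfCard W k).filter (Reaches · i j)).filter (IsSink · j) := by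
  ext A
  simp [and_assoc]

theorem _root_.IsInForest.card_le_maxForestCard (h : IsInForest W A) :
    A.card ≤ maxForestCard W :=
  Finset.le_sup (f := Finset.card) (by simp [h])

theorem exists_card_eq_maxForestCard (W : Matrix (Fin n) (Fin n) ℝ) :
    ∃ A, IsInForest W A ∧ A.card = maxForestCard W := by
  obtain ⟨A, hA, hcard⟩ := Finset.exists_mem_eq_sup
    (Finset.univ.powerset.filter fun A => IsInForest W A) ⟨∅, by simp [isInForest_empty]⟩
    Finset.card
  exact ⟨A, (Finset.mem_filter.mp hA).2, hcard.symm⟩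

theorem sigmaW_maxForestCard_pos (W : Matrix (Fin n) (Fin n) ℝ) :
    0 < sigmaW W (maxForestCard W) := by
  obtain ⟨A, hA, hcard⟩ := exists_card_eq_maxForestCard W
  exact Finset.sum_pos (fun B hB => forestWeight_pos (mem_forestsOfCard.mp hB).1)
    ⟨A, mem_forestsOfCard.mpr ⟨hA, hcard⟩⟩

theorem forestsOfCard_eq_empty (hk : maxForestCard W < k) : forestsOfCard W k = ∅ :=
  Finset.eq_empty_of_forall_notMem fun A hA => by
    obtain ⟨hF, rfl⟩ := mem_forestsOfCard.mp hA
    exact hk.not_ge hF.card_le_maxForestCard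

theorem sigmaW_eq_zero (hk : maxForestCard W < k) : sigmaW W k = 0 := by
  rw [sigmaW_eq_sum, forestsOfCard_eq_empty hk, Finset.sum_empty]

theorem forestMatrix_eq_zero (hk : maxForestCard W < k) : forestMatrix W k = 0 := by
  ext i j
  rw [forestMatrix_apply, rootedForests_eq_filter, forestsOfCard_eq_empty hk]
  rfl

theorem forestsOfCard_zero : forestsOfCard W 0 = {∅} := by
  ext A
  simp only [mem_forestsOfCard, Finset.card_eq_zero, Finset.mem_singleton]
  exact ⟨And.right, fun h => ⟨h ▸ isInForest_empty, h⟩⟩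

theorem sigmaW_zero : sigmaW W 0 = 1 := by
  rw [sigmaW_eq_sum, forestsOfCard_zero, Finset.sum_singleton, forestWeight, Finset.prod_empty]

theorem forestMatrix_zero : forestMatrix W 0 = 1 := by
  ext i j
  have hroot : IsSink (∅ : Finset (Fin n × Fin n)) i := by simp [IsSink]
  rw [forestMatrix_apply, rootedForests_eq_filter, forestsOfCard_zero, Matrix.one_apply]
  by_cases hij : i = j
  · subst hij
    simp [Finset.filter_singleton, forestWeight, hroot, ReflTransGen.refl]
  · have : ¬ Reaches (∅ : Finset (Fin n × Fin n)) i j := fun h => hij (hroot.eq_of_reaches h)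
    simp [Finset.filter_singleton, hij, this]

theorem maxForestCard_le (W : Matrix (Fin n) (Fin n) ℝ) : maxForestCard W ≤ n := by
  obtain ⟨A, hA, hcard⟩ := exists_card_eq_maxForestCard W
  have := card_filter_isSink_add_card hA.rightUnique
  rw [Fintype.card_fin] at this
  omega

theorem trace_forestMatrix (W : Matrix (Fin n) (Fin n) ℝ) (k : ℕ) :
    (forestMatrix W k).trace = ((n - k : ℕ) : ℝ) * sigmaW W k := by
  have hdiag : ∀ i, forestMatrix W k i i
      = ∑ A ∈ forestsOfCard W k, if IsSink A i then forestWeight W A else 0 := by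
    intro i
    rw [forestMatrix_apply, rootedForests_eq_filter, Finset.filter_true_of_mem
      fun A _ => ReflTransGen.refl, Finset.sum_filter]
  have hsinks : ∀ A ∈ forestsOfCard W k, (Finset.univ.filter (IsSink A)).card = n - k := by
    intro A hA
    obtain ⟨hF, rfl⟩ := mem_forestsOfCard.mp hA
    have := card_filter_isSink_add_card hF.rightUnique
    rw [Fintype.card_fin] at this
    omega
  simp only [Matrix.trace, Matrix.diag, hdiag]
  rw [Finset.sum_comm, sigmaW_eq_sum, Finset.mul_sum]
  refine Finset.sum_congr rfl fun A hA => ?_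
  rw [← Finset.sum_filter, Finset.sum_const, hsinks A hA, nsmul_eq_mul]

noncomputable def outArcPairs (W : Matrix (Fin n) (Fin n) ℝ) (k : ℕ) (i j : Fin n) :
    Finset (Σ _ : Fin n, Finset (Fin n × Fin n)) :=
  (Finset.univ.filter (0 < W j ·)).sigma fun _ => rootedForests W k i j

noncomputable def inArcPairs (W : Matrix (Fin n) (Fin n) ℝ) (k : ℕ) (i j : Fin n) :
    Finset (Σ _ : Fin n, Finset (Fin n × Fin n)) :=
  (Finset.univ.filter (0 < W · j)).sigma fun s => rootedForests W k i s

@[simp]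
theorem mem_outArcPairs {x : Σ _ : Fin n, Finset (Fin n × Fin n)} :
    x ∈ outArcPairs W k i j ↔ 0 < W j x.1 ∧ x.2 ∈ rootedForests W k i j := by
  simp [outArcPairs]

@[simp]
theorem mem_inArcPairs {x : Σ _ : Fin n, Finset (Fin n × Fin n)} :
    x ∈ inArcPairs W k i j ↔ 0 < W x.1 j ∧ x.2 ∈ rootedForests W k i x.1 := by
  simp [inArcPairs]

theorem isSink_of_mem_outArcPairs {x : Σ _ : Fin n, Finset (Fin n × Fin n)}
    (hx : x ∈ outArcPairs W k i j) : IsSink x.2 j :=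
  (mem_rootedForests.mp (mem_outArcPairs.mp hx).2).2.2.2

theorem isSink_of_mem_inArcPairs {x : Σ _ : Fin n, Finset (Fin n × Fin n)}
    (hx : x ∈ inArcPairs W k i j) : IsSink x.2 x.1 :=
  (mem_rootedForests.mp (mem_inArcPairs.mp hx).2).2.2.2

theorem sum_outArcPairs_not_reaches :
    ∑ x ∈ (outArcPairs W k i j).filter (fun x => ¬ Reaches x.2 x.1 j),
        W j x.1 * forestWeight W x.2
      = ∑ B ∈ ((forestsOfCard W (k + 1)).filter (Reaches · i j)).filter (¬ IsSink · j),
        forestWeight W B := by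
  refine Finset.sum_nbij (fun x => insert (j, x.1) x.2) ?_ ?_ ?_ ?_
  · rintro ⟨l, A⟩ hx
    simp only [Finset.mem_filter, mem_outArcPairs, mem_rootedForests] at hx
    obtain ⟨⟨hpos, hF, rfl, hij, hj⟩, hlj⟩ := hx
    have hne : j ≠ l := fun h => hlj (h ▸ ReflTransGen.refl)
    simp only [Finset.mem_filter, mem_forestsOfCard, isSink_insert, ne_eq, not_true_eq_false,
      false_and, not_false_eq_true, and_true]
    exact ⟨⟨hF.insert hpos hne hj hlj, Finset.card_insert_of_notMem (hj.not_mem l)⟩,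
      hij.mono (Finset.subset_insert _ _)⟩
  · rintro ⟨l, A⟩ hx ⟨l', A'⟩ hx' heq
    obtain ⟨rfl, rfl⟩ := (isSink_of_mem_outArcPairs (Finset.mem_of_mem_filter _ hx)).eq_of_insert_eq
      (isSink_of_mem_outArcPairs (Finset.mem_of_mem_filter _ hx')) heq
    rfl
  · intro B hB
    simp only [Finset.mem_coe, Finset.mem_filter, mem_forestsOfCard] at hB
    obtain ⟨⟨⟨hF, hcard⟩, hij⟩, hj⟩ := hB
    obtain ⟨l, hjl⟩ := exists_mem_of_not_isSink hj
    refine ⟨⟨l, B.erase (j, l)⟩, ?_, Finset.insert_erase hjl⟩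
    simp only [Finset.mem_coe, Finset.mem_filter, mem_outArcPairs, mem_rootedForests]
    refine ⟨⟨hF.pos hjl, hF.anti (Finset.erase_subset _ _), ?_,
      reaches_erase_of_reaches_fst (a := (j, l)) hij, isSink_erase hF.rightUnique hjl⟩,
      fun h => hF.acyclic.not_reaches_of_mem hjl (h.mono (Finset.erase_subset _ _))⟩
    rw [Finset.card_erase_of_mem hjl, hcard, Nat.add_sub_cancel]
  · rintro ⟨l, A⟩ hx
    exact (forestWeight_insert
      ((isSink_of_mem_outArcPairs (Finset.mem_of_mem_filter _ hx)).not_mem l)).symm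

theorem sum_inArcPairs_not_reaches :
    ∑ x ∈ (inArcPairs W k i j).filter (fun x => ¬ Reaches x.2 j x.1),
        W x.1 j * forestWeight W x.2
      = ∑ B ∈ (forestsOfCard W (k + 1)).filter (fun B => ∃ s, (s, j) ∈ B ∧ Reaches B i s),
        forestWeight W B := by
  have hforest : ∀ x ∈ (inArcPairs W k i j).filter (fun x => ¬ Reaches x.2 j x.1),
      IsInForest W (insert (x.1, j) x.2) := by
    rintro ⟨s, A⟩ hx
    simp only [Finset.mem_filter, mem_inArcPairs, mem_rootedForests] at hx
    obtain ⟨⟨hpos, hF, -, -, hs⟩, hjs⟩ := hx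
    exact hF.insert hpos (fun h => hjs (h ▸ ReflTransGen.refl)) hs hjs
  refine Finset.sum_nbij (fun x => insert (x.1, j) x.2) (fun x hx => ?_) ?_ ?_ ?_
  · obtain ⟨s, A⟩ := x
    have hB := hforest _ hx
    simp only [Finset.mem_filter, mem_inArcPairs, mem_rootedForests] at hx
    obtain ⟨⟨-, -, rfl, his, hs⟩, -⟩ := hx
    simp only [Finset.mem_filter, mem_forestsOfCard]
    exact ⟨⟨hB, Finset.card_insert_of_notMem (hs.not_mem j)⟩,
      s, Finset.mem_insert_self _ _, his.mono (Finset.subset_insert _ _)⟩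
  · rintro ⟨s, A⟩ hx ⟨s', A'⟩ hx' heq
    dsimp only at heq
    have hB := hforest _ hx
    simp only [Finset.mem_coe, Finset.mem_filter, mem_inArcPairs, mem_rootedForests] at hx hx'
    obtain ⟨⟨-, -, -, his, hs⟩, -⟩ := hx
    obtain ⟨⟨-, -, -, his', hs'⟩, -⟩ := hx'
    have hsub := Finset.subset_insert (s, j) A
    obtain rfl : s = s' := eq_of_mem_of_reaches hB.rightUnique (Or.inr hB.acyclic)
      (Finset.mem_insert_self _ _) (heq ▸ Finset.mem_insert_self _ _) (his.mono hsub)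
      (heq ▸ his'.mono (Finset.subset_insert _ _))
    obtain ⟨-, rfl⟩ := hs.eq_of_insert_eq hs' heq
    rfl
  · intro B hB
    simp only [Finset.mem_coe, Finset.mem_filter, mem_forestsOfCard] at hB
    obtain ⟨⟨hF, hcard⟩, s, hsj, his⟩ := hB
    refine ⟨⟨s, B.erase (s, j)⟩, ?_, Finset.insert_erase hsj⟩
    simp only [Finset.mem_coe, Finset.mem_filter, mem_inArcPairs, mem_rootedForests]
    refine ⟨⟨hF.pos hsj, hF.anti (Finset.erase_subset _ _), ?_,
      reaches_erase_of_reaches_fst (a := (s, j)) his, isSink_erase hF.rightUnique hsj⟩,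
      fun h => hF.acyclic.not_reaches_of_mem hsj (h.mono (Finset.erase_subset _ _))⟩
    rw [Finset.card_erase_of_mem hsj, hcard, Nat.add_sub_cancel]
  · rintro ⟨s, A⟩ hx
    exact (forestWeight_insert
      ((isSink_of_mem_inArcPairs (Finset.mem_of_mem_filter _ hx)).not_mem j)).symm

/-- For `x = ⟨s, A⟩` with `j` in the tree of `A` rooted at `s`: re-root that tree at `j` by
deleting the arc `j → l` and adding `s → j`, and record `l`. -/
noncomputable def rerootAt (j : Fin n) (x : Σ _ : Fin n, Finset (Fin n × Fin n)) :
    Σ _ : Fin n, Finset (Fin n × Fin n) :=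
  ⟨outNeighbor x.2 j, insert (x.1, j) (x.2.erase (j, outNeighbor x.2 j))⟩

theorem rerootAt_spec (hdiag : ∀ a, W a a = 0) {s : Fin n} {A : Finset (Fin n × Fin n)}
    (hx : ⟨s, A⟩ ∈ (inArcPairs W k i j).filter (fun x => Reaches x.2 j x.1)) :
    s ≠ j ∧ (j, outNeighbor A j) ∈ A ∧
      Reaches (A.erase (j, outNeighbor A j)) (outNeighbor A j) s := by
  simp only [Finset.mem_filter, mem_inArcPairs, mem_rootedForests] at hx
  obtain ⟨⟨hpos, hF, -, -, -⟩, hjs⟩ := hx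
  have hsj : s ≠ j := by rintro rfl; simp [hdiag] at hpos
  obtain ⟨l, hjl, -⟩ := (hjs.cases_head).resolve_left hsj.symm
  rw [outNeighbor_eq hF.rightUnique hjl]
  exact ⟨hsj, hjl,
    reaches_erase_of_reaches_of_mem hF.rightUnique hF.acyclic hjl hjs hsj.symm⟩

theorem rerootAt_mem (hdiag : ∀ a, W a a = 0) {x : Σ _ : Fin n, Finset (Fin n × Fin n)}
    (hx : x ∈ (inArcPairs W k i j).filter (fun x => Reaches x.2 j x.1)) :
    rerootAt j x ∈ (outArcPairs W k i j).filter (fun x => Reaches x.2 x.1 j) := by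
  obtain ⟨s, A⟩ := x
  obtain ⟨hsj, hjl, hls⟩ := rerootAt_spec hdiag hx
  simp only [Finset.mem_filter, mem_inArcPairs, mem_rootedForests] at hx
  obtain ⟨⟨hpos, hF, rfl, his, hs⟩, -⟩ := hx
  simp only [rerootAt, Finset.mem_filter, mem_outArcPairs, mem_rootedForests]
  set l := outNeighbor A j
  have hj₀ : IsSink (A.erase (j, l)) j := isSink_erase hF.rightUnique hjl
  have hs₀ : IsSink (A.erase (j, l)) s := hs.anti (Finset.erase_subset _ _)
  have hsub := Finset.subset_insert (s, j) (A.erase (j, l))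
  refine ⟨⟨hF.pos hjl, (hF.anti (Finset.erase_subset _ _)).insert hpos hsj hs₀
    (fun h => hsj (hj₀.eq_of_reaches h).symm), ?_, ?_, isSink_insert.mpr ⟨hsj, hj₀⟩⟩,
    (hls.mono hsub).tail (Finset.mem_insert_self _ _)⟩
  · rw [Finset.card_insert_of_notMem (hs₀.not_mem j), Finset.card_erase_add_one hjl]
  · rcases reaches_erase_or (a := (j, l)) his with h | ⟨h, -⟩
    · exact (h.mono hsub).tail (Finset.mem_insert_self _ _)
    · exact h.mono hsub

theorem exists_rerootAt_eq (hdiag : ∀ a, W a a = 0) {y : Σ _ : Fin n, Finset (Fin n × Fin n)}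
    (hy : y ∈ (outArcPairs W k i j).filter (fun x => Reaches x.2 x.1 j)) :
    ∃ x ∈ (inArcPairs W k i j).filter (fun x => Reaches x.2 j x.1), rerootAt j x = y := by
  obtain ⟨l, A⟩ := y
  simp only [Finset.mem_filter, mem_outArcPairs, mem_rootedForests] at hy
  obtain ⟨⟨hpos, hF, rfl, hij, hj⟩, hlj⟩ := hy
  have hjl : j ≠ l := by rintro rfl; simp [hdiag] at hpos
  obtain ⟨s, hsj, hls⟩ := exists_last_of_reaches hlj hjl.symm
  have hjs : j ≠ s := by have := hF.pos hsj; rintro rfl; simp [hdiag] at this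
  set A₁ := A.erase (s, j) with hA₁
  have hs₁ : IsSink A₁ s := isSink_erase hF.rightUnique hsj
  have hj₁ : IsSink A₁ j := hj.anti (Finset.erase_subset _ _)
  have hls₁ : Reaches A₁ l s := reaches_erase_of_reaches_fst (a := (s, j)) hls
  have hlj₁ : ¬ Reaches A₁ l j := not_reaches_erase_of_mem hF.rightUnique hj hsj hls hjl.symm
  have hF' : IsInForest W (insert (j, l) A₁) :=
    (hF.anti (Finset.erase_subset _ _)).insert hpos hjl hj₁ hlj₁
  have hsub := Finset.subset_insert (j, l) A₁
  have hjs' : Reaches (insert (j, l) A₁) j s :=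
    ReflTransGen.head (Finset.mem_insert_self _ _) (hls₁.mono hsub)
  refine ⟨⟨s, insert (j, l) A₁⟩, ?_, ?_⟩
  · simp only [Finset.mem_filter, mem_inArcPairs, mem_rootedForests]
    refine ⟨⟨hF.pos hsj, hF', ?_, ?_, isSink_insert.mpr ⟨hjs, hs₁⟩⟩, hjs'⟩
    · rw [Finset.card_insert_of_notMem (hj₁.not_mem l), Finset.card_erase_add_one hsj]
    · rcases reaches_erase_or (a := (s, j)) hij with h | ⟨h, -⟩
      · exact (h.mono hsub).trans hjs'
      · exact h.mono hsub
  · have hl : outNeighbor (insert (j, l) A₁) j = l :=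
      outNeighbor_eq hF'.rightUnique (Finset.mem_insert_self _ _)
    simp only [rerootAt, hl, Finset.erase_insert (hj₁.not_mem l)]
    rw [hA₁, Finset.insert_erase hsj]

theorem rerootAt_injOn (hdiag : ∀ a, W a a = 0) :
    Set.InjOn (rerootAt j) ((inArcPairs W k i j).filter (fun x => Reaches x.2 j x.1)) := by
  rintro ⟨s, A⟩ hx ⟨s', A'⟩ hx' heq
  rw [Finset.mem_coe] at hx hx'
  have hB := rerootAt_mem hdiag hx'
  obtain ⟨-, hjl, hls⟩ := rerootAt_spec hdiag hx
  obtain ⟨-, hjl', hls'⟩ := rerootAt_spec hdiag hx'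
  have hs := (isSink_of_mem_inArcPairs (Finset.mem_of_mem_filter _ hx)).anti
    (Finset.erase_subset (j, outNeighbor A j) A)
  have hs' := (isSink_of_mem_inArcPairs (Finset.mem_of_mem_filter _ hx')).anti
    (Finset.erase_subset (j, outNeighbor A' j) A')
  simp only [rerootAt, Sigma.mk.injEq, heq_iff_eq] at heq hB
  obtain ⟨hl, hA⟩ := heq
  rw [hl] at hjl hls hA hs
  set l := outNeighbor A' j
  simp only [Finset.mem_filter, mem_outArcPairs, mem_rootedForests] at hB
  obtain ⟨⟨-, hF, -, -, hj⟩, -⟩ := hB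
  -- both `s → j` and `s' → j` end the path from `l` to the root `j`
  obtain rfl : s = s' := eq_of_mem_of_reaches hF.rightUnique (Or.inl hj)
    (hA ▸ Finset.mem_insert_self _ _) (Finset.mem_insert_self _ _)
    (hA ▸ hls.mono (Finset.subset_insert _ _)) (hls'.mono (Finset.subset_insert _ _))
  obtain ⟨-, hA₀⟩ := hs.eq_of_insert_eq hs' hA
  refine Sigma.ext rfl (heq_of_eq ?_)
  rw [← Finset.insert_erase hjl, ← Finset.insert_erase hjl', hA₀]

theorem sum_inArcPairs_reaches (hdiag : ∀ a, W a a = 0) :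
    ∑ x ∈ (inArcPairs W k i j).filter (fun x => Reaches x.2 j x.1),
        W x.1 j * forestWeight W x.2
      = ∑ x ∈ (outArcPairs W k i j).filter (fun x => Reaches x.2 x.1 j),
        W j x.1 * forestWeight W x.2 := by
  refine Finset.sum_nbij (rerootAt j) (fun x hx => rerootAt_mem hdiag hx) (rerootAt_injOn hdiag)
    (fun y hy => exists_rerootAt_eq hdiag hy) fun x hx => ?_
  obtain ⟨s, A⟩ := x
  obtain ⟨-, hjl, -⟩ := rerootAt_spec hdiag hx
  have hs := isSink_of_mem_inArcPairs (Finset.mem_of_mem_filter _ hx)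
  simp only [rerootAt]
  rw [forestWeight_insert ((hs.anti (Finset.erase_subset _ _)).not_mem j),
    forestWeight, forestWeight, ← Finset.mul_prod_erase _ _ hjl]
  ring

theorem forestMatrix_mul_sum_row (hW : ∀ a b, 0 ≤ W a b) :
    forestMatrix W k i j * ∑ l, W j l
      = ∑ x ∈ outArcPairs W k i j, W j x.1 * forestWeight W x.2 := by
  simp only [outArcPairs, Finset.sum_sigma, ← Finset.mul_sum, ← forestMatrix_apply]
  rw [Finset.sum_filter_of_ne fun l _ h => (hW j l).lt_of_ne' (left_ne_zero_of_mul h),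
    Finset.mul_sum]
  simp_rw [mul_comm]

theorem sum_forestMatrix_mul (hW : ∀ a b, 0 ≤ W a b) :
    ∑ s, forestMatrix W k i s * W s j
      = ∑ x ∈ inArcPairs W k i j, W x.1 j * forestWeight W x.2 := by
  simp only [inArcPairs, Finset.sum_sigma, ← Finset.mul_sum, ← forestMatrix_apply]
  rw [Finset.sum_filter_of_ne fun s _ h => (hW s j).lt_of_ne' (left_ne_zero_of_mul h)]
  simp_rw [mul_comm]

theorem sum_filter_reaches :
    ∑ B ∈ (forestsOfCard W k).filter (Reaches · i j), forestWeight W B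
      = ∑ B ∈ (forestsOfCard W k).filter (fun B => ∃ s, (s, j) ∈ B ∧ Reaches B i s),
          forestWeight W B
        + if i = j then sigmaW W k else 0 := by
  split_ifs with hij
  · subst hij
    rw [Finset.filter_true_of_mem fun B _ => ReflTransGen.refl, Finset.filter_false_of_mem,
      Finset.sum_empty, zero_add, sigmaW_eq_sum]
    rintro B hB ⟨s, hsi, his⟩
    exact (mem_forestsOfCard.mp hB).1.acyclic.not_reaches_of_mem hsi his
  · rw [add_zero]
    refine Finset.sum_congr (Finset.filter_congr fun B _ => ?_) fun _ _ => rfl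
    exact ⟨fun h => exists_last_of_reaches h hij, fun ⟨s, hsj, his⟩ => his.tail hsj⟩

theorem forestMatrix_mul_sum_row_add (hW : ∀ a b, 0 ≤ W a b) (hdiag : ∀ a, W a a = 0) :
    forestMatrix W k i j * ∑ l, W j l + forestMatrix W (k + 1) i j
      = ∑ s, forestMatrix W k i s * W s j + if i = j then sigmaW W (k + 1) else 0 := by
  rw [forestMatrix_mul_sum_row hW, sum_forestMatrix_mul hW,
    ← Finset.sum_filter_add_sum_filter_not (outArcPairs W k i j) (fun x => Reaches x.2 x.1 j),
    ← Finset.sum_filter_add_sum_filter_not (inArcPairs W k i j) (fun x => Reaches x.2 j x.1),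
    sum_outArcPairs_not_reaches, sum_inArcPairs_not_reaches, sum_inArcPairs_reaches hdiag,
    forestMatrix_apply, rootedForests_eq_filter]
  have hsplit := Finset.sum_filter_add_sum_filter_not
    ((forestsOfCard W (k + 1)).filter (Reaches · i j)) (IsSink · j) (forestWeight W)
  have hreach := sum_filter_reaches (W := W) (k := k + 1) (i := i) (j := j)
  linarith

theorem forestMatrix_mul_lap (hW : ∀ a b, 0 ≤ W a b) (hdiag : ∀ a, W a a = 0) (k : ℕ) :
    forestMatrix W k * lap W = sigmaW W (k + 1) • 1 - forestMatrix W (k + 1) := by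
  ext i j
  have key := forestMatrix_mul_sum_row_add (k := k) (i := i) (j := j) hW hdiag
  rw [lap, Matrix.mul_sub, Matrix.sub_apply, Matrix.mul_diagonal, Matrix.mul_apply,
    Matrix.sub_apply, Matrix.smul_apply, Matrix.one_apply]
  split_ifs at key ⊢ <;> simp only [smul_eq_mul, mul_one, mul_zero] <;> linarith

theorem lap_mulVec_one (W : Matrix (Fin n) (Fin n) ℝ) : lap W *ᵥ 1 = 0 := by
  ext i
  simp [lap, Matrix.mulVec, dotProduct, Matrix.diagonal_apply]

theorem Jtilde_mul_lap (hW : ∀ a b, 0 ≤ W a b) (hdiag : ∀ a, W a a = 0) :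
    Jtilde W * lap W = 0 := by
  rw [Jtilde, Matrix.smul_mul, forestMatrix_mul_lap hW hdiag,
    sigmaW_eq_zero (lt_add_one _), forestMatrix_eq_zero (lt_add_one _), zero_smul, sub_zero,
    smul_zero]

theorem exists_mul_lap_eq_one_sub_Jtilde (hW : ∀ a b, 0 ≤ W a b) (hdiag : ∀ a, W a a = 0) :
    ∃ M, M * lap W = 1 - Jtilde W := by
  have hσ := (sigmaW_maxForestCard_pos W).ne'
  rcases hm : maxForestCard W with _ | m
  · refine ⟨0, ?_⟩
    rw [Matrix.zero_mul, Jtilde, hm, forestMatrix_zero, sigmaW_zero, inv_one, one_smul, sub_self]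
  · rw [hm] at hσ
    refine ⟨(sigmaW W (m + 1))⁻¹ • forestMatrix W m, ?_⟩
    rw [Matrix.smul_mul, forestMatrix_mul_lap hW hdiag, Jtilde, hm, smul_sub, smul_smul,
      inv_mul_cancel₀ hσ, one_smul]

theorem rank_Jtilde (hJ : IsIdempotentElem (Jtilde W)) :
    (Jtilde W).rank = n - maxForestCard W := by
  have htrace : (Jtilde W).trace = ((n - maxForestCard W : ℕ) : ℝ) := by
    rw [Jtilde, Matrix.trace_smul, trace_forestMatrix, smul_eq_mul, mul_left_comm,
      inv_mul_cancel₀ (sigmaW_maxForestCard_pos W).ne', mul_one]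
  exact_mod_cast (Matrix.rank_eq_trace_of_isIdempotentElem hJ).trans htrace

end InForest

open InForest in
/-- `L` has index `1`, `rank L = n − d`, `N(L) = R(J̃)`, `R(L) = N(J̃)`, and `J̃`
is the eigenprojection of `L` at `0`: the projection onto `N(L)` along `R(L)`. -/
theorem lap_index_one_eigenprojection {n : ℕ} (W : Matrix (Fin n) (Fin n) ℝ)
    (hn : 1 < n) (hW : ∀ i j, 0 ≤ W i j) (hdiag : ∀ i, W i i = 0) :
    (lap W * lap W).rank = (lap W).rank ∧
    (lap W).rank < n ∧
    (lap W).rank = n - forestDim W ∧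
    LinearMap.ker (lap W).mulVecLin = LinearMap.range (Jtilde W).mulVecLin ∧
    LinearMap.range (lap W).mulVecLin = LinearMap.ker (Jtilde W).mulVecLin ∧
    Jtilde W * Jtilde W = Jtilde W := by
  have hJL := Jtilde_mul_lap hW hdiag
  obtain ⟨M, hML⟩ := exists_mul_lap_eq_one_sub_Jtilde hW hdiag
  have hJJ := Matrix.isIdempotentElem_of_mul_eq_one_sub hJL hML
  have hranks := Matrix.rank_add_rank_of_mul_eq_one_sub hJL hML
  have hJ := rank_Jtilde hJJ
  have hm := maxForestCard_le W
  have : NeZero n := ⟨by omega⟩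
  have hlt := Matrix.rank_lt_card_of_mulVec_eq_zero one_ne_zero (lap_mulVec_one W)
  rw [Fintype.card_fin] at hranks hlt
  obtain ⟨hker, hrange⟩ := Matrix.ker_eq_range_and_range_eq_ker_of_mul_eq_one_sub hJL hML
  exact ⟨Matrix.rank_mul_self_of_mul_eq_one_sub hJL hML, hlt, by rw [forestDim]; omega,
    hker, hrange, hJJ⟩
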